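/- arXiv:1203.4600 — 2 statements merged into one kernel-verified Lean document; each statement's English description precedes it below -/
import Mathlib

section
/- Let P be a finite collection of points, S a finite collection of pairwise distinct 2-dimensional real algebraic surfaces in ℝ⁴ such that distinct surfaces intersect in finitely many points, and let I ⊆ {(p,S) : p ∈ S} be a set of incidences such that: each (p,S) ∈ I has p a smooth point of S, and whenever p lies on two distinct surfaces S, S′, the tangent planes satisfy T_p(S) ∩ T_p(S′) = {p}. Suppose V ⊊ ℝ⁴ is a real algebraic variety (so dim V ≤ 3) with S ⊆ V for every S ∈ S, and every (p,S) ∈ I has p a smooth point of V. Then |I| ≤ |P|; that is, for each point p ∈ P there is at most one surface S with (p,S) ∈ I. -/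
open MvPolynomial

/-- `p` is a smooth point of the `k`-dimensional real algebraic surface `S ⊆ ℝ⁴`:
near `p` the set `S` has a well-defined tangent space, a linear subspace of
dimension `k`. -/
def IsSmoothPointOfDim (S : Set (Fin 4 → ℝ)) (p : Fin 4 → ℝ) (k : ℕ) : Prop :=
  p ∈ S ∧ ∃ W : Submodule ℝ (Fin 4 → ℝ), Module.finrank ℝ W = k ∧
    tangentConeAt ℝ S p = (W : Set (Fin 4 → ℝ))

/-- The affine tangent plane of `S` at `p` (the translate of the tangent cone to `p`). -/
def TangentPlaneAt (S : Set (Fin 4 → ℝ)) (p : Fin 4 → ℝ) : Set (Fin 4 → ℝ) :=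
  {x | x - p ∈ tangentConeAt ℝ S p}

/-!
At a common smooth point `p`, the tangent planes of two surfaces lying in `V` are 2-dimensional
subspaces of the tangent space of `V` at `p`, which has dimension at most 3. By the dimension
formula they share a nonzero vector `v`, so `p + v` lies on both affine tangent planes, which
therefore do not meet in `p` alone. Hence each point carries at most one incidence.
-/

open Module

theorem Submodule.not_disjoint_of_finrank_lt_add {K V : Type*} [DivisionRing K] [AddCommGroup V]
    [Module K V] [FiniteDimensional K V] {s t W : Submodule K V} (hs : s ≤ W) (ht : t ≤ W)
    (h : finrank K W < finrank K s + finrank K t) : ¬Disjoint s t := by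
  intro hst
  have hdim := Submodule.finrank_sup_add_finrank_inf_eq s t
  rw [hst.eq_bot, finrank_bot, add_zero] at hdim
  have := Submodule.finrank_mono (sup_le hs ht)
  omega

theorem add_mem_tangentPlaneAt_iff {S : Set (Fin 4 → ℝ)} {p v : Fin 4 → ℝ} :
    p + v ∈ TangentPlaneAt S p ↔ v ∈ tangentConeAt ℝ S p := by
  simp only [TangentPlaneAt, Set.mem_ofPred_eq, add_sub_cancel_left]

theorem disjoint_of_tangentPlaneAt_inter_eq_singleton {S S' : Set (Fin 4 → ℝ)}
    {p : Fin 4 → ℝ} {W W' : Submodule ℝ (Fin 4 → ℝ)} (hW : tangentConeAt ℝ S p = W)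
    (hW' : tangentConeAt ℝ S' p = W')
    (h : TangentPlaneAt S p ∩ TangentPlaneAt S' p = {p}) : Disjoint W W' := by
  rw [Submodule.disjoint_def]
  intro v hv hv'
  have hpv : p + v ∈ TangentPlaneAt S p ∩ TangentPlaneAt S' p :=
    ⟨add_mem_tangentPlaneAt_iff.2 (hW ▸ hv), add_mem_tangentPlaneAt_iff.2 (hW' ▸ hv')⟩
  rwa [h, Set.mem_singleton_iff, add_eq_left] at hpv

theorem tangentPlaneAt_inter_ne_singleton {S S' V : Set (Fin 4 → ℝ)} {p : Fin 4 → ℝ}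
    (hS : IsSmoothPointOfDim S p 2) (hS' : IsSmoothPointOfDim S' p 2)
    (hV : ∃ k ≤ 3, IsSmoothPointOfDim V p k) (hSV : S ⊆ V) (hS'V : S' ⊆ V) :
    TangentPlaneAt S p ∩ TangentPlaneAt S' p ≠ {p} := by
  obtain ⟨-, W₁, hW₁dim, hW₁⟩ := hS
  obtain ⟨-, W₂, hW₂dim, hW₂⟩ := hS'
  obtain ⟨k, hk, -, W, hWdim, hW⟩ := hV
  have hW₁W : W₁ ≤ W := by
    rw [← SetLike.coe_subset_coe, ← hW₁, ← hW]
    exact tangentConeAt_mono hSV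
  have hW₂W : W₂ ≤ W := by
    rw [← SetLike.coe_subset_coe, ← hW₂, ← hW]
    exact tangentConeAt_mono hS'V
  have hdim : finrank ℝ W < finrank ℝ W₁ + finrank ℝ W₂ := by omega
  exact fun h => Submodule.not_disjoint_of_finrank_lt_add hW₁W hW₂W hdim
    (disjoint_of_tangentPlaneAt_inter_eq_singleton hW₁ hW₂ h)

theorem stmt_5_general (P : Finset (Fin 4 → ℝ)) (𝒮 : Finset (Set (Fin 4 → ℝ)))
    (I : Set ((Fin 4 → ℝ) × Set (Fin 4 → ℝ)))
    (hI : ∀ ps ∈ I, ps.1 ∈ P ∧ ps.2 ∈ 𝒮 ∧ ps.1 ∈ ps.2)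
    -- each incidence occurs at a smooth point of the (2-dimensional) surface
    (hsmooth : ∀ ps ∈ I, IsSmoothPointOfDim ps.2 ps.1 2)
    -- tangent planes of distinct surfaces at a common point meet only at that point
    (htang : ∀ p s s', (p, s) ∈ I → (p, s') ∈ I → s ≠ s' →
      TangentPlaneAt s p ∩ TangentPlaneAt s' p = {p})
    -- `V` is a proper real algebraic subvariety of `ℝ⁴` containing every surface
    (V : Set (Fin 4 → ℝ))
    (hSV : ∀ s ∈ 𝒮, s ⊆ V)
    -- each incidence occurs at a smooth point of `V` (of dimension at most 3)
    (hVsmooth : ∀ ps ∈ I, ∃ k ≤ 3, IsSmoothPointOfDim V ps.1 k) :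
    I.ncard ≤ P.card := by
  have hinj : Set.InjOn Prod.fst I := by
    rintro ⟨p, s⟩ hps ⟨p', s'⟩ hps' (rfl : p = p')
    refine Prod.ext rfl (by_contra fun hss' => ?_)
    exact tangentPlaneAt_inter_ne_singleton (hsmooth (p, s) hps) (hsmooth (p, s') hps')
      (hVsmooth _ hps) (hSV s (hI _ hps).2.1) (hSV s' (hI _ hps').2.1)
      (htang p s s' hps hps' hss')
  calc I.ncard ≤ (P : Set (Fin 4 → ℝ)).ncard :=
        Set.ncard_le_ncard_of_injOn Prod.fst (fun ps hps => (hI ps hps).1) hinj P.finite_toSet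
    _ = P.card := Set.ncard_coe_finset P

/-- If a family of 2-dimensional real algebraic surfaces in `ℝ⁴`, any two of which
meet in finitely many points, is entirely contained in a proper real algebraic
variety `V ⊊ ℝ⁴`, and `I` is an admissible collection of incidences (each incidence
occurs at a smooth point of the surface, tangent planes of distinct surfaces at a
common point meet only in that point, and each incidence occurs at a smooth point
of `V`), then `|I| ≤ |P|`. -/
theorem stmt_5 (P : Finset (Fin 4 → ℝ)) (𝒮 : Finset (Set (Fin 4 → ℝ)))
    -- each surface is a 2-dimensional real algebraic set
    (halg : ∀ s ∈ 𝒮, ∃ F : Set (MvPolynomial (Fin 4) ℝ),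
      s = {x | ∀ f ∈ F, MvPolynomial.eval x f = 0})
    -- distinct surfaces intersect in finitely many points
    (hfin : ∀ s ∈ 𝒮, ∀ s' ∈ 𝒮, s ≠ s' → (s ∩ s').Finite)
    (I : Set ((Fin 4 → ℝ) × Set (Fin 4 → ℝ)))
    (hI : ∀ ps ∈ I, ps.1 ∈ P ∧ ps.2 ∈ 𝒮 ∧ ps.1 ∈ ps.2)
    -- each incidence occurs at a smooth point of the (2-dimensional) surface
    (hsmooth : ∀ ps ∈ I, IsSmoothPointOfDim ps.2 ps.1 2)
    -- tangent planes of distinct surfaces at a common point meet only at that point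
    (htang : ∀ p s s', (p, s) ∈ I → (p, s') ∈ I → s ≠ s' →
      TangentPlaneAt s p ∩ TangentPlaneAt s' p = {p})
    -- `V` is a proper real algebraic subvariety of `ℝ⁴` containing every surface
    (V : Set (Fin 4 → ℝ)) (hVne : V ≠ Set.univ)
    (hValg : ∃ F : Set (MvPolynomial (Fin 4) ℝ),
      V = {x | ∀ f ∈ F, MvPolynomial.eval x f = 0})
    (hSV : ∀ s ∈ 𝒮, s ⊆ V)
    -- each incidence occurs at a smooth point of `V` (of dimension at most 3)
    (hVsmooth : ∀ ps ∈ I, ∃ k ≤ 3, IsSmoothPointOfDim V ps.1 k) :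
    I.ncard ≤ P.card :=
  stmt_5_general P 𝒮 I hI hsmooth htang V hSV hVsmooth
end

section
/- Let P₁,…,P_d ∈ ℝ[x₁,…,x_d] be real polynomials of degrees D₁,…,D_d. Then the number of nonsingular intersection points of Z(P₁) ∩ ⋯ ∩ Z(P_d) (points where the gradients ∇P₁,…,∇P_d are linearly independent) is at most D₁·D₂⋯D_d. -/
/-!
Perturb the system to `P j + s X_j ^ D j`. By the implicit function theorem every nonsingular
common zero of the `P j` moves to a nearby common zero of the perturbed system for all small `s`,
so `N` nonsingular zeros give `N` distinct zeros of the perturbed ideal. For all but finitely many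
`s`, every polynomial of degree `≤ δ` is congruent modulo the perturbed ideal to a combination of
the `∏ D j` box monomials `X^β` with `β j < D j`: the relations `s X^α + X^(α - D_j e_j) P_j`
form a linear system with matrix `s + R`, singular only at the roots of the characteristic
polynomial of `-R`. As polynomials of degree `< N` separate `N` points, `N ≤ ∏ D j`.
-/

open MvPolynomial Filter Topology

section Algebra

variable {K : Type*} [Field K] {σ : Type*}

theorem MvPolynomial.exists_totalDegree_le_eval_eq_pi_single {ι : Type*} [Fintype ι]
    [DecidableEq ι] {y : ι → σ → K} (hy : Function.Injective y) (i : ι) :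
    ∃ f : MvPolynomial σ K, f.totalDegree ≤ Fintype.card ι - 1 ∧
      ∀ k, eval (y k) f = (Pi.single i 1 : ι → K) k := by
  have hfactor : ∀ k : {k // k ≠ i}, ∃ g : MvPolynomial σ K,
      g.totalDegree ≤ 1 ∧ eval (y i) g = 1 ∧ eval (y k) g = 0 := by
    intro ⟨k, hk⟩
    obtain ⟨c, hc⟩ := Function.ne_iff.mp (hy.ne hk)
    refine ⟨C (y i c - y k c)⁻¹ * (X c - C (y k c)), ?_, ?_, by simp⟩
    · calc _ ≤ (C (y i c - y k c)⁻¹ : MvPolynomial σ K).totalDegree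
            + (X c - C (y k c)).totalDegree := totalDegree_mul _ _
        _ ≤ 0 + 1 := add_le_add (totalDegree_C _).le
            ((totalDegree_sub_C_le _ _).trans (totalDegree_X _).le)
    · simp [inv_mul_cancel₀ (sub_ne_zero.mpr (Ne.symm hc))]
  choose g hg_deg hg_one hg_zero using hfactor
  refine ⟨∏ k, g k, ?_, fun k => ?_⟩
  · calc _ ≤ ∑ k, (g k).totalDegree := totalDegree_finsetProd _ _
      _ ≤ ∑ _k : {k // k ≠ i}, 1 := Finset.sum_le_sum fun k _ => hg_deg k
      _ = Fintype.card ι - 1 := by simp [Fintype.card_subtype_compl]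
  · rw [map_prod]
    by_cases hk : k = i
    · subst hk
      simp [hg_one]
    · rw [Pi.single_eq_of_ne hk]
      exact Finset.prod_eq_zero (Finset.mem_univ ⟨k, hk⟩) (hg_zero ⟨k, hk⟩)

theorem MvPolynomial.card_le_finrank_of_restrictTotalDegree_le_sup {ι : Type*} [Fintype ι]
    {y : ι → σ → K} (hy : Function.Injective y) {J B : Submodule K (MvPolynomial σ K)}
    [FiniteDimensional K B] (hJ : ∀ p ∈ J, ∀ k, eval (y k) p = 0)
    (hle : restrictTotalDegree σ K (Fintype.card ι - 1) ≤ J ⊔ B) :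
    Fintype.card ι ≤ Module.finrank K B := by
  classical
  let ev : MvPolynomial σ K →ₗ[K] ι → K := LinearMap.pi fun k => (aeval (y k)).toLinearMap
  have hev : ∀ p k, ev p k = eval (y k) p := fun p k => by simp [ev]
  have hJ_map : J.map ev = ⊥ := by
    rw [eq_bot_iff, Submodule.map_le_iff_le_comap]
    intro p hp
    simp only [Submodule.mem_comap, Submodule.mem_bot]
    funext k
    simp [hev, hJ p hp k]
  have htop : (restrictTotalDegree σ K (Fintype.card ι - 1)).map ev = ⊤ := by
    rw [eq_top_iff, ← (Pi.basisFun K ι).span_eq, Submodule.span_le]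
    rintro _ ⟨i, rfl⟩
    obtain ⟨f, hf_deg, hf⟩ := exists_totalDegree_le_eval_eq_pi_single hy i
    exact ⟨f, (mem_restrictTotalDegree _ _ _).2 hf_deg, by ext k; simp [hev, hf]⟩
  have hB_map : (⊤ : Submodule K (ι → K)) ≤ B.map ev := by
    calc _ = (restrictTotalDegree σ K (Fintype.card ι - 1)).map ev := htop.symm
      _ ≤ (J ⊔ B).map ev := Submodule.map_mono hle
      _ = B.map ev := by rw [Submodule.map_sup, hJ_map, bot_sup_eq]
  calc Fintype.card ι = Module.finrank K (⊤ : Submodule K (ι → K)) := by simp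
    _ ≤ Module.finrank K (B.map ev) := Submodule.finrank_mono hB_map
    _ ≤ Module.finrank K B := Submodule.finrank_map_le _ _

noncomputable def Finsupp.boxEquivPiFin [Finite σ] (D : σ → ℕ) :
    {β : σ →₀ ℕ | ∀ j, β j < D j} ≃ ∀ j, Fin (D j) :=
  (Finsupp.equivFunOnFinite.subtypeEquiv fun _ => Iff.rfl).trans
    (Equiv.subtypePiEquivPi.trans (Equiv.piCongrRight fun _ => Fin.equivSubtype.symm))

instance [Finite σ] (D : σ → ℕ) :
    FiniteDimensional K (restrictSupport K {β : σ →₀ ℕ | ∀ j, β j < D j}) :=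
  have : Finite {β : σ →₀ ℕ | ∀ j, β j < D j} :=
    Finite.of_equiv _ (Finsupp.boxEquivPiFin D).symm
  Module.Finite.of_basis (basisRestrictSupport K _)

theorem MvPolynomial.finrank_restrictSupport_box [Fintype σ] (D : σ → ℕ) :
    Module.finrank K (restrictSupport K {β : σ →₀ ℕ | ∀ j, β j < D j}) = ∏ j, D j := by
  rw [Module.finrank_eq_nat_card_basis (basisRestrictSupport K _)]
  rw [Nat.card_congr (Finsupp.boxEquivPiFin D)]
  simp [Nat.card_pi]

theorem Submodule.mem_of_isUnit_det {R M ι : Type*} [CommRing R] [AddCommGroup M] [Module R M]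
    [Fintype ι] [DecidableEq ι] {N : Submodule R M} {e : ι → M} {A : Matrix ι ι R}
    (hA : IsUnit A.det) (h : ∀ α, ∑ β, A β α • e β ∈ N) (α : ι) : e α ∈ N := by
  have : e α = ∑ γ, A⁻¹ γ α • ∑ β, A β γ • e β := by
    calc e α = ∑ β, (A * A⁻¹) β α • e β := by
          simp [Matrix.mul_nonsing_inv _ hA, Matrix.one_apply]
      _ = ∑ γ, A⁻¹ γ α • ∑ β, A β γ • e β := by
        simp_rw [Matrix.mul_apply, Finset.sum_smul, Finset.smul_sum, smul_smul, mul_comm]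
        exact Finset.sum_comm
  rw [this]
  exact Submodule.sum_mem _ fun γ _ => N.smul_mem _ (h γ)

noncomputable def MvPolynomial.perturbedIdeal (P : σ → MvPolynomial σ K) (D : σ → ℕ)
    (s : K) : Ideal (MvPolynomial σ K) :=
  Ideal.span (Set.range fun j => P j + C s * X j ^ D j)

theorem MvPolynomial.exists_totalDegree_le_and_C_mul_monomial_add_mem
    (P : σ → MvPolynomial σ K) {D : σ → ℕ} (hdeg : ∀ j, (P j).totalDegree ≤ D j) (α : σ →₀ ℕ) :
    ∃ q : MvPolynomial σ K, q.totalDegree ≤ α.degree ∧ ∀ s : K,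
      C s * monomial α 1 + q ∈
        (perturbedIdeal P D s).restrictScalars K ⊔ restrictSupport K {β | ∀ j, β j < D j} := by
  by_cases hbox : ∀ j, α j < D j
  · refine ⟨0, by simp, fun s => Submodule.mem_sup_right ?_⟩
    rw [add_zero, C_mul_monomial, mul_one, monomial_mem_restrictSupport]
    exact Or.inl hbox
  · push Not at hbox
    obtain ⟨j, hj⟩ := hbox
    have hle : Finsupp.single j (D j) ≤ α := Finsupp.single_le_iff.2 hj
    set γ := α - Finsupp.single j (D j)
    have hα : α = γ + Finsupp.single j (D j) := (tsub_add_cancel_of_le hle).symm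
    refine ⟨monomial γ 1 * P j, ?_, fun s => Submodule.mem_sup_left ?_⟩
    · calc _ ≤ (monomial γ (1 : K)).totalDegree + (P j).totalDegree := totalDegree_mul _ _
        _ ≤ γ.degree + D j := add_le_add (totalDegree_monomial_le _ _) (hdeg j)
        _ = α.degree := by rw [hα, map_add, Finsupp.degree_single]
    · have : C s * monomial α 1 + monomial γ 1 * P j
          = monomial γ 1 * (P j + C s * X j ^ D j) := by
        rw [show monomial α (1 : K) = monomial γ 1 * X j ^ D j by
          rw [X_pow_eq_monomial, monomial_mul, one_mul, ← hα]]
        ring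
      rw [Submodule.restrictScalars_mem, this]
      exact Ideal.mul_mem_left _ _ (Ideal.subset_span ⟨j, rfl⟩)

theorem MvPolynomial.sum_coeff_smul_monomial_of_support_subset {R : Type*} [CommSemiring R]
    {p : MvPolynomial σ R} {E : Finset (σ →₀ ℕ)} (hE : p.support ⊆ E) :
    ∑ β ∈ E, coeff β p • monomial β (1 : R) = p := by
  simp_rw [smul_monomial, smul_eq_mul, mul_one]
  conv_rhs => rw [p.as_sum]
  exact (Finset.sum_subset hE fun β _ hβ => by rw [notMem_support_iff.1 hβ, monomial_zero]).symm

theorem MvPolynomial.finite_setOf_not_restrictTotalDegree_le_sup [Finite σ]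
    (P : σ → MvPolynomial σ K) {D : σ → ℕ} (hdeg : ∀ j, (P j).totalDegree ≤ D j) (δ : ℕ) :
    {s : K | ¬ restrictTotalDegree σ K δ ≤
        (perturbedIdeal P D s).restrictScalars K ⊔
          restrictSupport K {β | ∀ j, β j < D j}}.Finite := by
  classical
  choose q hq_deg hq_mem using exists_totalDegree_le_and_C_mul_monomial_add_mem P hdeg
  set E := (Finsupp.finite_of_degree_le (σ := σ) δ).toFinset
  let R : Matrix E E K := Matrix.of fun β α => coeff β.1 (q α)
  refine (Polynomial.finite_setOfPred_isRoot (Matrix.charpoly_monic (-R)).ne_zero).subset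
    fun s hs => ?_
  by_contra hroot
  have hA : IsUnit (Matrix.scalar E s - -R).det := by
    rw [← Matrix.eval_charpoly]
    exact isUnit_iff_ne_zero.2 hroot
  apply hs
  rw [restrictTotalDegree, restrictSupport_eq_span, Submodule.span_le]
  rintro _ ⟨α, hα, rfl⟩
  refine Submodule.mem_of_isUnit_det (e := fun β : E => monomial β.1 (1 : K)) hA (fun α => ?_)
    ⟨α, (Set.Finite.mem_toFinset _).2 hα⟩
  have hq_sum : ∑ β : E, coeff β.1 (q α) • monomial β.1 (1 : K) = q α := by
    have hα_deg : α.1 ∈ {f : σ →₀ ℕ | f.degree ≤ δ} := (Set.Finite.mem_toFinset _).1 α.2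
    rw [Finset.sum_coe_sort E (fun β => coeff β (q α) • monomial β (1 : K))]
    exact sum_coeff_smul_monomial_of_support_subset fun β hβ => (Set.Finite.mem_toFinset _).2
      ((le_totalDegree hβ).trans ((hq_deg α).trans hα_deg))
  convert hq_mem α s using 1
  calc ∑ β, (Matrix.scalar E s - -R) β α • monomial β.1 (1 : K)
      = ∑ β, (Matrix.diagonal (fun _ => s) β α • monomial β.1 (1 : K)
          + coeff β.1 (q α) • monomial β.1 1) := by
        simp only [Matrix.scalar_apply, Matrix.sub_apply, Matrix.neg_apply, sub_neg_eq_add,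
          Matrix.of_apply, add_smul, R]
    _ = C s * monomial α.1 1 + q α := by
        rw [Finset.sum_add_distrib, hq_sum, ← smul_eq_C_mul]
        simp [Matrix.diagonal_apply, ite_smul]

end Algebra

section Analysis

variable {𝕜 : Type*} [NontriviallyNormedField 𝕜] {σ : Type*}

theorem HasStrictFDerivAt.eventually_exists_mem_apply_eq
    {E₁ E₂ F : Type*} [NormedAddCommGroup E₁] [NormedSpace 𝕜 E₁] [CompleteSpace E₁]
    [NormedAddCommGroup E₂] [NormedSpace 𝕜 E₂] [CompleteSpace E₂]
    [NormedAddCommGroup F] [NormedSpace 𝕜 F] [CompleteSpace F]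
    {f : E₁ × E₂ → F} {f' : E₁ × E₂ →L[𝕜] F} {u : E₁ × E₂}
    (hf : HasStrictFDerivAt f f' u) (hinv : (f' ∘L .inr 𝕜 E₁ E₂).IsInvertible)
    {U : Set E₂} (hU : U ∈ 𝓝 u.2) :
    ∀ᶠ x in 𝓝 u.1, ∃ y ∈ U, f (x, y) = f u := by
  filter_upwards [hf.eventually_apply_implicitFunctionOfProdDomain hinv,
    hf.tendsto_implicitFunctionOfProdDomain hinv hU] with x hx hxU
  exact ⟨_, hxU, hx⟩

theorem ContinuousLinearMap.isInvertible_of_injective [CompleteSpace 𝕜] {E : Type*}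
    [NormedAddCommGroup E] [NormedSpace 𝕜 E] [FiniteDimensional 𝕜 E] {f : E →L[𝕜] E}
    (hf : Function.Injective f) : f.IsInvertible :=
  ⟨(LinearEquiv.ofInjectiveEndo f.toLinearMap hf).toContinuousLinearEquiv, rfl⟩

theorem MvPolynomial.hasStrictFDerivAt_eval [Fintype σ] (p : MvPolynomial σ 𝕜) (a : σ → 𝕜) :
    HasStrictFDerivAt (fun x => eval x p)
      (∑ i, eval a (pderiv i p) • ContinuousLinearMap.proj (R := 𝕜) (φ := fun _ : σ => 𝕜) i)
      a := by
  classical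
  induction p using MvPolynomial.induction_on with
  | C r =>
    simp only [eval_C]
    refine (hasStrictFDerivAt_const (𝕜 := 𝕜) r a).congr_fderiv ?_
    ext v
    simp
  | add p q hp hq =>
    simp only [map_add]
    refine (hp.add hq).congr_fderiv ?_
    ext v
    simp [add_mul, Finset.sum_add_distrib]
  | mul_X p k hp =>
    simp only [map_mul, eval_X]
    refine (hp.mul (ContinuousLinearMap.proj k).hasStrictFDerivAt).congr_fderiv ?_
    ext v
    simp [pderiv_X, Pi.single_apply, apply_ite (eval a), add_mul, Finset.sum_add_distrib,
      Finset.mul_sum, mul_assoc]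

theorem MvPolynomial.eventually_exists_mem_eval_add_C_mul_eq_zero [CompleteSpace 𝕜] [Fintype σ]
    (P Q : σ → MvPolynomial σ 𝕜) {a : σ → 𝕜} (ha : ∀ j, eval a (P j) = 0)
    (hP : LinearIndependent 𝕜 fun j i => eval a (pderiv i (P j)))
    {U : Set (σ → 𝕜)} (hU : U ∈ 𝓝 a) :
    ∀ᶠ s in 𝓝 (0 : 𝕜), ∃ y ∈ U, ∀ j, eval y (P j + C s * Q j) = 0 := by
  classical
  let DP j :=
    ∑ i, eval a (pderiv i (P j)) • ContinuousLinearMap.proj (R := 𝕜) (φ := fun _ : σ => 𝕜) i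
  let f' : 𝕜 × (σ → 𝕜) →L[𝕜] σ → 𝕜 :=
    .pi fun j => (DP j).comp (.snd 𝕜 𝕜 (σ → 𝕜)) + eval a (Q j) • .fst 𝕜 𝕜 (σ → 𝕜)
  have hf : HasStrictFDerivAt (fun w : 𝕜 × (σ → 𝕜) => fun j => eval w.2 (P j + C w.1 * Q j))
      f' ((0 : 𝕜), a) := by
    refine hasStrictFDerivAt_pi.2 fun j => ?_
    simp only [map_add, map_mul, eval_C]
    have hP_snd (p : MvPolynomial σ 𝕜) :=
      (hasStrictFDerivAt_eval p a).comp (f := Prod.snd) ((0 : 𝕜), a) hasStrictFDerivAt_snd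
    refine ((hP_snd (P j)).add (hasStrictFDerivAt_fst.mul (hP_snd (Q j)))).congr_fderiv ?_
    ext w <;> simp [DP]
  have hinv : (f' ∘L .inr 𝕜 𝕜 (σ → 𝕜)).IsInvertible := by
    refine ContinuousLinearMap.isInvertible_of_injective fun v w hvw => ?_
    apply Matrix.mulVec_injective_iff_isUnit.2 <| Matrix.linearIndependent_rows_iff_isUnit
      (A := Matrix.of fun j i => eval a (pderiv i (P j))).1 hP
    ext j
    simpa [Matrix.mulVec, dotProduct, f', DP] using congrFun hvw j
  filter_upwards [hf.eventually_exists_mem_apply_eq hinv hU] with s ⟨y, hyU, hy⟩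
  exact ⟨y, hyU, fun j => by simpa [ha] using congrFun hy j⟩

end Analysis

theorem Set.encard_le_coe_of_forall_finset_card_le {α : Type*} {s : Set α} {n : ℕ}
    (h : ∀ t : Finset α, ↑t ⊆ s → t.card ≤ n) : s.encard ≤ n := by
  by_contra! hlt
  obtain ⟨t, hts, ht⟩ := Set.exists_subset_encard_eq (Order.add_one_le_of_lt hlt)
  have htfin : t.Finite := Set.finite_of_encard_eq_coe (k := n + 1) (by simpa using ht)
  have := h htfin.toFinset (by simpa using hts)
  rw [htfin.encard_eq_coe_toFinset_card] at ht
  norm_cast at ht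
  omega

theorem MvPolynomial.card_le_prod_of_nonsingular_zeros {𝕜 σ : Type*} [NontriviallyNormedField 𝕜]
    [CompleteSpace 𝕜] [Fintype σ] (P : σ → MvPolynomial σ 𝕜) {D : σ → ℕ}
    (hdeg : ∀ j, (P j).totalDegree ≤ D j)
    (T : Finset (σ → 𝕜)) (hT : ∀ x ∈ T, (∀ j, eval x (P j) = 0) ∧
      LinearIndependent 𝕜 fun j i => eval x (pderiv i (P j))) :
    T.card ≤ ∏ j, D j := by
  obtain ⟨U, hU, hdisj⟩ := T.finite_toSet.t2_separation
  have hnear : ∀ᶠ s in 𝓝 (0 : 𝕜), ∀ a ∈ T, ∃ y ∈ U a,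
      ∀ j, eval y (P j + C s * X j ^ D j) = 0 :=
    (eventually_all_finset T).2 fun a ha => eventually_exists_mem_eval_add_C_mul_eq_zero P _
      (hT a ha).1 (hT a ha).2 ((hU a).2.mem_nhds (hU a).1)
  obtain ⟨s, hs_near, hs_good⟩ := ((hnear.filter_mono nhdsWithin_le_nhds).and
    (nhdsNE_le_cofinite (0 : 𝕜)
      (finite_setOf_not_restrictTotalDegree_le_sup P hdeg (T.card - 1)).compl_mem_cofinite)
    ).exists
  choose y hyU hy using hs_near
  have hinj : Function.Injective fun a : T => y a a.2 := by
    rintro ⟨a, ha⟩ ⟨b, hb⟩ hab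
    by_contra hne
    exact Set.disjoint_left.1 (hdisj ha hb (by simpa using hne)) (hyU a ha)
      (by rw [show y a ha = y b hb from hab]; exact hyU b hb)
  have hvanish : ∀ p ∈ (perturbedIdeal P D s).restrictScalars 𝕜,
      ∀ a : T, eval (y a a.2) p = 0 := fun p hp a =>
    (Ideal.span_le (I := RingHom.ker (eval (y a a.2))).2
      (by rintro _ ⟨j, rfl⟩; exact hy a a.2 j)) hp
  calc T.card = Fintype.card T := (Fintype.card_coe T).symm
    _ ≤ Module.finrank 𝕜 (restrictSupport 𝕜 {β : σ →₀ ℕ | ∀ j, β j < D j}) :=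
      card_le_finrank_of_restrictTotalDegree_le_sup hinj hvanish (by simpa using hs_good)
    _ = ∏ j, D j := finrank_restrictSupport_box D

/-- The real Bézout theorem: if `P₁,…,P_d` are real polynomials in `d` variables
of degrees `D₁,…,D_d`, then the number of nonsingular intersection points of
their real zero sets (points where all `P_j` vanish and the gradients
`∇P₁,…,∇P_d` are linearly independent) is at most `D₁ ⋯ D_d`. -/
theorem stmt_10 (d : ℕ) (P : Fin d → MvPolynomial (Fin d) ℝ) (D : Fin d → ℕ)
    (hdeg : ∀ j, (P j).totalDegree = D j) :
    {x : Fin d → ℝ | (∀ j, eval x (P j) = 0) ∧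
        LinearIndependent ℝ (fun j : Fin d => fun i : Fin d =>
          eval x (pderiv i (P j)))}.Finite ∧
    {x : Fin d → ℝ | (∀ j, eval x (P j) = 0) ∧
        LinearIndependent ℝ (fun j : Fin d => fun i : Fin d =>
          eval x (pderiv i (P j)))}.ncard ≤ ∏ j, D j := by
  rw [← Set.encard_le_coe_iff_finite_ncard_le]
  exact Set.encard_le_coe_of_forall_finset_card_le fun T hT =>
    card_le_prod_of_nonsingular_zeros P (fun j => (hdeg j).le) T fun x hx => hT hx
end
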